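/- arXiv:2010.13419 — 5 statements merged into one kernel-verified Lean document; each statement's English description precedes it below -/
import Mathlib

section
/- Let R be a (not necessarily commutative) ring and n a natural number. Suppose N_r, D_r, N_l, D_l, X_l, Y_l, X_r, Y_r are n×n matrices over R satisfying the doubly coprime identity: X_l·N_r + Y_l·D_r = 1, X_l·Y_r − Y_l·X_r = 0, D_l·N_r − N_l·D_r = 0, and D_l·Y_r + N_l·X_r = 1. Then for every n×n matrix Q over R, the matrices D_cl := X_l − Q·D_l, N_cl := Y_l + Q·N_l, N_cr := Y_r + N_r·Q, D_cr := X_r − D_r·Q satisfy the doubly coprime identity of the compensated interconnection: D_cl·N_r + N_cl·D_r = 1, D_cl·N_cr − N_cl·D_cr = 0, D_l·N_r − N_l·D_r = 0, and D_l·N_cr + N_l·D_cr = 1. -/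
/-!
In block form the hypothesis says `L * R = 1` for `L = !![Xl, Yl; Dl, -Nl]` and
`R = !![Nr, Yr; Dr, -Xr]`. With the unipotent `U = !![1, -Q; 0, 1]`, the compensated pair is
`(U * L, R * U⁻¹)`, whose product is again `U * U⁻¹ = 1`. Entrywise, each identity is the
corresponding entry of `L * R` perturbed by `Q`-multiples of the other entries, which vanish or
cancel.
-/

structure IsDoublyCoprime {A : Type*} [Ring A] (Nr Dr Nl Dl Xl Yl Xr Yr : A) : Prop where
  left_bezout : Xl * Nr + Yl * Dr = 1
  cross : Xl * Yr - Yl * Xr = 0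
  factorizations_agree : Dl * Nr - Nl * Dr = 0
  right_bezout : Dl * Yr + Nl * Xr = 1

namespace IsDoublyCoprime

variable {A : Type*} [Ring A] {Nr Dr Nl Dl Xl Yl Xr Yr : A}

theorem compensate (h : IsDoublyCoprime Nr Dr Nl Dl Xl Yl Xr Yr) (Q : A) :
    IsDoublyCoprime Nr Dr Nl Dl (Xl - Q * Dl) (Yl + Q * Nl) (Xr - Dr * Q) (Yr + Nr * Q) where
  left_bezout := calc
    (Xl - Q * Dl) * Nr + (Yl + Q * Nl) * Dr
        = (Xl * Nr + Yl * Dr) - Q * (Dl * Nr - Nl * Dr) := by noncomm_ring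
    _ = 1 := by rw [h.left_bezout, h.factorizations_agree, mul_zero, sub_zero]
  cross := calc
    (Xl - Q * Dl) * (Yr + Nr * Q) - (Yl + Q * Nl) * (Xr - Dr * Q)
        = (Xl * Yr - Yl * Xr) + (Xl * Nr + Yl * Dr) * Q
          - Q * (Dl * Yr + Nl * Xr) - Q * (Dl * Nr - Nl * Dr) * Q := by noncomm_ring
    _ = 0 := by
      rw [h.cross, h.left_bezout, h.right_bezout, h.factorizations_agree]
      noncomm_ring
  factorizations_agree := h.factorizations_agree
  right_bezout := calc
    Dl * (Yr + Nr * Q) + Nl * (Xr - Dr * Q)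
        = (Dl * Yr + Nl * Xr) + (Dl * Nr - Nl * Dr) * Q := by noncomm_ring
    _ = 1 := by rw [h.right_bezout, h.factorizations_agree, zero_mul, add_zero]

end IsDoublyCoprime

/-- Parametrization of stabilizing compensators: for any free parameter `Q`,
the compensator fractions built from a doubly coprime identity again satisfy the
doubly coprime identity of the compensated interconnection. -/
theorem stmt_0 {R : Type*} [Ring R] {n : ℕ}
    (Nr Dr Nl Dl Xl Yl Xr Yr : Matrix (Fin n) (Fin n) R)
    (h1 : Xl * Nr + Yl * Dr = 1)
    (h2 : Xl * Yr - Yl * Xr = 0)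
    (h3 : Dl * Nr - Nl * Dr = 0)
    (h4 : Dl * Yr + Nl * Xr = 1)
    (Q : Matrix (Fin n) (Fin n) R) :
    (Xl - Q * Dl) * Nr + (Yl + Q * Nl) * Dr = 1 ∧
    (Xl - Q * Dl) * (Yr + Nr * Q) - (Yl + Q * Nl) * (Xr - Dr * Q) = 0 ∧
    Dl * Nr - Nl * Dr = 0 ∧
    Dl * (Yr + Nr * Q) + Nl * (Xr - Dr * Q) = 1 := by
  have h := IsDoublyCoprime.compensate ⟨h1, h2, h3, h4⟩ Q
  exact ⟨h.left_bezout, h.cross, h.factorizations_agree, h.right_bezout⟩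
end

section
/- Let K be a field and n a natural number. Let N_r, D_r, N_cl, D_cl be invertible n×n matrices over K satisfying D_cl·N_r + N_cl·D_r = 1. Define H := N_r·D_r⁻¹ and H_c := D_cl⁻¹·N_cl. Then H and H_c are invertible, the matrix H⁻¹ + H_c⁻¹ is invertible, and (H⁻¹ + H_c⁻¹)⁻¹ = N_r·N_cl. Consequently, if S is a subring of K and every entry of N_r and of N_cl lies in S, then every entry of (H⁻¹ + H_c⁻¹)⁻¹ lies in S. -/
open Matrix

/-!
With `H = N_r D_r⁻¹` and `H_c = D_cl⁻¹ N_cl`, the Bezout identity gives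
`H⁻¹ + H_c⁻¹ = D_r N_r⁻¹ + N_cl⁻¹ D_cl = N_cl⁻¹ (N_cl D_r + D_cl N_r) N_r⁻¹ = (N_r N_cl)⁻¹`,
so the interconnection matrix is `N_r N_cl`, whose entries are sums of products of entries
of `N_r` and `N_cl`.
-/

namespace Matrix

variable {m n α : Type*}

theorem mul_apply_mem {R : Type*} [Fintype m] [NonUnitalNonAssocSemiring α] [SetLike R α]
    [AddSubmonoidClass R α] [MulMemClass R α] {S : R} {A : Matrix n m α} {B : Matrix m n α}
    (hA : ∀ i j, A i j ∈ S) (hB : ∀ i j, B i j ∈ S) (i j : n) : (A * B) i j ∈ S := by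
  rw [mul_apply]
  exact sum_mem fun k _ => mul_mem (hA i k) (hB k j)

variable [Fintype n] [DecidableEq n] [CommRing α]

theorem nonsing_inv_add_nonsing_inv_of_bezout {A B C D : Matrix n n α}
    (hA : IsUnit A) (hB : IsUnit B) (hC : IsUnit C) (hD : IsUnit D) (h : D * A + C * B = 1) :
    (A * B⁻¹)⁻¹ + (D⁻¹ * C)⁻¹ = (A * C)⁻¹ := by
  rw [isUnit_iff_isUnit_det] at hA hB hC hD
  calc (A * B⁻¹)⁻¹ + (D⁻¹ * C)⁻¹ = B * A⁻¹ + C⁻¹ * D := by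
        rw [mul_inv_rev, mul_inv_rev, nonsing_inv_nonsing_inv _ hB, nonsing_inv_nonsing_inv _ hD]
    _ = C⁻¹ * (D * A + C * B) * A⁻¹ := by
        rw [Matrix.mul_add, Matrix.add_mul, nonsing_inv_mul_cancel_left _ _ hC,
          ← Matrix.mul_assoc, mul_nonsing_inv_cancel_right _ _ hA, add_comm]
    _ = (A * C)⁻¹ := by rw [h, Matrix.mul_one, mul_inv_rev]

end Matrix

/-- Sufficiency mechanism of Theorem 1: if `D_cl·N_r + N_cl·D_r = 1` with all four
matrices invertible, then the interconnection hybrid matrix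
`(H⁻¹ + H_c⁻¹)⁻¹` equals `N_r·N_cl`; in particular its entries lie in any subring
containing the entries of `N_r` and `N_cl`. -/
theorem stmt_1 {K : Type*} [Field K] {n : ℕ}
    (Nr Dr Ncl Dcl : Matrix (Fin n) (Fin n) K)
    (hNr : IsUnit Nr) (hDr : IsUnit Dr) (hNcl : IsUnit Ncl) (hDcl : IsUnit Dcl)
    (hbez : Dcl * Nr + Ncl * Dr = 1) :
    IsUnit (Nr * Dr⁻¹) ∧ IsUnit (Dcl⁻¹ * Ncl) ∧
    IsUnit ((Nr * Dr⁻¹)⁻¹ + (Dcl⁻¹ * Ncl)⁻¹) ∧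
    ((Nr * Dr⁻¹)⁻¹ + (Dcl⁻¹ * Ncl)⁻¹)⁻¹ = Nr * Ncl ∧
    ∀ (S : Subring K),
      (∀ i j, Nr i j ∈ S) → (∀ i j, Ncl i j ∈ S) →
      ∀ i j, ((Nr * Dr⁻¹)⁻¹ + (Dcl⁻¹ * Ncl)⁻¹)⁻¹ i j ∈ S := by
  have hsum := nonsing_inv_add_nonsing_inv_of_bezout hNr hDr hNcl hDcl hbez
  have hprod : IsUnit (Nr * Ncl) := hNr.mul hNcl
  have hinv : ((Nr * Dr⁻¹)⁻¹ + (Dcl⁻¹ * Ncl)⁻¹)⁻¹ = Nr * Ncl := by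
    rw [hsum, nonsing_inv_nonsing_inv _ ((isUnit_iff_isUnit_det _).mp hprod)]
  refine ⟨hNr.mul (isUnit_nonsing_inv_iff.mpr hDr), (isUnit_nonsing_inv_iff.mpr hDcl).mul hNcl,
    hsum ▸ isUnit_nonsing_inv_iff.mpr hprod, hinv, fun S hS1 hS2 => ?_⟩
  rw [hinv]
  exact mul_apply_mem hS1 hS2
end

section
/- Let K be a field and n a natural number. Suppose N_r, D_r, N_l, D_l, X_l, Y_l, X_r, Y_r are n×n matrices over K satisfying the doubly coprime identity: X_l·N_r + Y_l·D_r = 1, X_l·Y_r − Y_l·X_r = 0, D_l·N_r − N_l·D_r = 0, and D_l·Y_r + N_l·X_r = 1. Let Q be any n×n matrix over K such that X_l − Q·D_l and X_r − D_r·Q are invertible. Then (X_l − Q·D_l)⁻¹·(Y_l + Q·N_l) = (Y_r + N_r·Q)·(X_r − D_r·Q)⁻¹. -/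
open Matrix

/-! The difference of the two cross products
`(Xl - Q Dl)(Yr + Nr Q)` and `(Yl + Q Nl)(Xr - Dr Q)` expands, in any ring, to
`(Xl Yr - Yl Xr) + (Xl Nr + Yl Dr) Q - Q (Dl Yr + Nl Xr) - Q (Dl Nr - Nl Dr) Q`,
which the doubly coprime identity makes `0 + Q - Q - 0`. Cancelling the two invertible factors
turns the cross identity into the equality of the left and right fractions. -/

theorem doublyCoprime_cross_mul_eq {R : Type*} [Ring R] {Nr Dr Nl Dl Xl Yl Xr Yr : R}
    (h1 : Xl * Nr + Yl * Dr = 1) (h2 : Xl * Yr - Yl * Xr = 0)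
    (h3 : Dl * Nr - Nl * Dr = 0) (h4 : Dl * Yr + Nl * Xr = 1) (Q : R) :
    (Xl - Q * Dl) * (Yr + Nr * Q) = (Yl + Q * Nl) * (Xr - Dr * Q) := by
  rw [← sub_eq_zero]
  calc (Xl - Q * Dl) * (Yr + Nr * Q) - (Yl + Q * Nl) * (Xr - Dr * Q)
      = (Xl * Yr - Yl * Xr) + (Xl * Nr + Yl * Dr) * Q - Q * (Dl * Yr + Nl * Xr)
          - Q * (Dl * Nr - Nl * Dr) * Q := by noncomm_ring
    _ = 0 := by rw [h1, h2, h3, h4]; noncomm_ring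

theorem Matrix.inv_mul_eq_mul_inv_of_mul_eq {n α : Type*} [Fintype n] [DecidableEq n]
    [CommRing α] {A B C D : Matrix n n α} (hA : IsUnit A) (hD : IsUnit D)
    (h : A * B = C * D) : A⁻¹ * C = B * D⁻¹ := by
  rw [isUnit_iff_isUnit_det] at hA hD
  calc A⁻¹ * C = A⁻¹ * (C * D * D⁻¹) := by rw [mul_nonsing_inv_cancel_right _ _ hD]
    _ = A⁻¹ * (A * (B * D⁻¹)) := by rw [← h, Matrix.mul_assoc]
    _ = B * D⁻¹ := nonsing_inv_mul_cancel_left _ _ hA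

/-- The two alternative formulae for the stabilizing compensator agree:
`(X_l − Q·D_l)⁻¹·(Y_l + Q·N_l) = (Y_r + N_r·Q)·(X_r − D_r·Q)⁻¹`. -/
theorem stmt_2 {K : Type*} [Field K] {n : ℕ}
    (Nr Dr Nl Dl Xl Yl Xr Yr : Matrix (Fin n) (Fin n) K)
    (h1 : Xl * Nr + Yl * Dr = 1)
    (h2 : Xl * Yr - Yl * Xr = 0)
    (h3 : Dl * Nr - Nl * Dr = 0)
    (h4 : Dl * Yr + Nl * Xr = 1)
    (Q : Matrix (Fin n) (Fin n) K)
    (hl : IsUnit (Xl - Q * Dl)) (hr : IsUnit (Xr - Dr * Q)) :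
    (Xl - Q * Dl)⁻¹ * (Yl + Q * Nl) = (Yr + Nr * Q) * (Xr - Dr * Q)⁻¹ :=
  inv_mul_eq_mul_inv_of_mul_eq hl hr (doublyCoprime_cross_mul_eq h1 h2 h3 h4 Q)
end

section
/- In RatFunc ℝ with variable X, define the perturbed impedance Z̃ := (1.05·(X + 0.9268)·(X − 0.5579)) / ((X + 1.171)·(X − 0.2951)) and the compensator impedance Z_c := (−1.0732·(X + 3.455)·(X + 1)) / ((X + 1.231)·(X + 3.387)), where all decimal coefficients are exact rational numbers. Then Z̃ + Z_c ≠ 0, so the interconnected impedance Z_T := (Z̃⁻¹ + Z_c⁻¹)⁻¹ is a well-defined element of RatFunc ℝ, and Z_T is stable: every complex root z of the denominator of Z_T (in reduced form, coefficients embedded into ℂ) satisfies Re z < 0. -/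
open Polynomial

/-- Perturbed impedance (+5% on all parameters). -/
noncomputable def Ztilde : RatFunc ℝ :=
  RatFunc.mk (C (1.05 : ℝ) * (X + C (0.9268 : ℝ)) * (X - C (0.5579 : ℝ)))
    ((X + C (1.171 : ℝ)) * (X - C (0.2951 : ℝ)))

/-- Robustly stabilizing compensator impedance. -/
noncomputable def Zc : RatFunc ℝ :=
  RatFunc.mk (C (-1.0732 : ℝ) * (X + C (3.455 : ℝ)) * (X + C (1 : ℝ)))
    ((X + C (1.231 : ℝ)) * (X + C (3.387 : ℝ)))

/-!
Writing `Z̃ = n₁ / d₁` and `Z_c = n₂ / d₂`, both `Z̃ + Z_c` and `Z_T = n₁ n₂ / (n₁ d₂ + d₁ n₂)`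
are governed by the quartic `P = n₁ d₂ + d₁ n₂`. It changes sign on each of the intervals
`(-17, -3)`, `(-3, -2)`, `(-2, -1)`, `(-1, 0)`, so it has four distinct negative real roots;
as `deg P ≤ 4` these are all of its roots even over `ℂ`, and the denominator of `Z_T` divides `P`.
-/

open Set

namespace RatFunc

variable {K : Type*} [Field K]

theorem mk_inv (p q : K[X]) : (RatFunc.mk p q)⁻¹ = RatFunc.mk q p := by
  simp only [mk_eq_div, inv_div]

theorem mk_add_mk {p₁ q₁ p₂ q₂ : K[X]} (hq₁ : q₁ ≠ 0) (hq₂ : q₂ ≠ 0) :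
    RatFunc.mk p₁ q₁ + RatFunc.mk p₂ q₂ = RatFunc.mk (p₁ * q₂ + q₁ * p₂) (q₁ * q₂) := by
  simp only [mk_eq_div, map_add, map_mul]
  exact div_add_div _ _ (algebraMap_ne_zero hq₁) (algebraMap_ne_zero hq₂)

theorem mk_ne_zero {p q : K[X]} (hp : p ≠ 0) (hq : q ≠ 0) : RatFunc.mk p q ≠ 0 := by
  rw [mk_eq_div]
  exact div_ne_zero (algebraMap_ne_zero hp) (algebraMap_ne_zero hq)

theorem denom_mk_dvd (p q : K[X]) : (RatFunc.mk p q).denom ∣ q :=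
  mk_eq_div p q ▸ denom_div_dvd p q

end RatFunc

namespace Polynomial

theorem exists_eq_of_eval_map_eq_zero {K L : Type*} [Field K] [CommRing L] [IsDomain L]
    (f : K →+* L) {p : K[X]} (hp : p ≠ 0) {S : Finset K} (hS : ∀ x ∈ S, p.eval x = 0)
    (hcard : p.natDegree ≤ S.card) {z : L} (hz : (p.map f).eval z = 0) :
    ∃ x ∈ S, f x = z := by
  have hroots : p.roots = S.val := roots_eq_of_natDegree_le_card_of_ne_zero hS hcard hp
  have hsplit : Multiset.card p.roots = p.natDegree :=
    le_antisymm (card_roots' p) (hroots ▸ hcard)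
  have hz_mem : z ∈ (p.map f).roots :=
    (mem_roots (map_ne_zero hp)).mpr hz
  rw [← roots_map_of_injective_of_card_eq_natDegree f.injective hsplit, hroots] at hz_mem
  exact Multiset.mem_map.mp hz_mem

theorem exists_mem_Ioo_eval_eq_zero_of_eval_mul_neg {p : ℝ[X]} {a b : ℝ} (hab : a ≤ b)
    (h : p.eval a * p.eval b < 0) : ∃ r ∈ Ioo a b, p.eval r = 0 := by
  have hcont : ContinuousOn (fun x => p.eval x) (Icc a b) := p.continuous.continuousOn
  rcases mul_neg_iff.mp h with ⟨ha, hb⟩ | ⟨ha, hb⟩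
  · exact intermediate_value_Ioo' hab hcont ⟨hb, ha⟩
  · exact intermediate_value_Ioo hab hcont ⟨ha, hb⟩

end Polynomial

noncomputable def ZtildeNum : ℝ[X] := C (1.05 : ℝ) * (X + C (0.9268 : ℝ)) * (X - C (0.5579 : ℝ))

noncomputable def ZtildeDen : ℝ[X] := (X + C (1.171 : ℝ)) * (X - C (0.2951 : ℝ))

noncomputable def ZcNum : ℝ[X] := C (-1.0732 : ℝ) * (X + C (3.455 : ℝ)) * (X + C (1 : ℝ))

noncomputable def ZcDen : ℝ[X] := (X + C (1.231 : ℝ)) * (X + C (3.387 : ℝ))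

noncomputable def interconnectionPoly : ℝ[X] := ZtildeNum * ZcDen + ZtildeDen * ZcNum

theorem Ztilde_eq_mk : Ztilde = RatFunc.mk ZtildeNum ZtildeDen := rfl

theorem Zc_eq_mk : Zc = RatFunc.mk ZcNum ZcDen := rfl

theorem ZtildeNum_ne_zero : ZtildeNum ≠ 0 :=
  mul_ne_zero (mul_ne_zero (C_ne_zero.mpr (by norm_num)) (X_add_C_ne_zero _)) (X_sub_C_ne_zero _)

theorem ZtildeDen_ne_zero : ZtildeDen ≠ 0 :=
  mul_ne_zero (X_add_C_ne_zero _) (X_sub_C_ne_zero _)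

theorem ZcNum_ne_zero : ZcNum ≠ 0 :=
  mul_ne_zero (mul_ne_zero (C_ne_zero.mpr (by norm_num)) (X_add_C_ne_zero _)) (X_add_C_ne_zero _)

theorem ZcDen_ne_zero : ZcDen ≠ 0 :=
  mul_ne_zero (X_add_C_ne_zero _) (X_add_C_ne_zero _)

theorem interconnectionPoly_eval (x : ℝ) :
    interconnectionPoly.eval x =
      1.05 * (x + 0.9268) * (x - 0.5579) * ((x + 1.231) * (x + 3.387)) +
        (x + 1.171) * (x - 0.2951) * (-1.0732 * (x + 3.455) * (x + 1)) := by
  simp only [interconnectionPoly, ZtildeNum, ZtildeDen, ZcNum, ZcDen, eval_add, eval_mul,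
    eval_sub, eval_X, eval_C]

theorem interconnectionPoly_ne_zero : interconnectionPoly ≠ 0 := by
  intro h
  have := interconnectionPoly_eval 0
  rw [h, eval_zero] at this
  norm_num at this

theorem interconnectionPoly_natDegree_le : interconnectionPoly.natDegree ≤ 4 := by
  unfold interconnectionPoly ZtildeNum ZtildeDen ZcNum ZcDen
  compute_degree

theorem interconnectionPoly_re_neg_of_eval_map_eq_zero {z : ℂ}
    (hz : (interconnectionPoly.map (algebraMap ℝ ℂ)).eval z = 0) : z.re < 0 := by
  have sign_change (a b : ℝ) (hab : a ≤ b)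
      (h : interconnectionPoly.eval a * interconnectionPoly.eval b < 0) :
      ∃ r ∈ Ioo a b, interconnectionPoly.eval r = 0 :=
    exists_mem_Ioo_eval_eq_zero_of_eval_mul_neg hab h
  obtain ⟨r₁, ⟨-, hr₁⟩, hroot₁⟩ :=
    sign_change (-17) (-3) (by norm_num) (by simp only [interconnectionPoly_eval]; norm_num)
  obtain ⟨r₂, ⟨hr₂', hr₂⟩, hroot₂⟩ :=
    sign_change (-3) (-2) (by norm_num) (by simp only [interconnectionPoly_eval]; norm_num)
  obtain ⟨r₃, ⟨hr₃', hr₃⟩, hroot₃⟩ :=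
    sign_change (-2) (-1) (by norm_num) (by simp only [interconnectionPoly_eval]; norm_num)
  obtain ⟨r₄, ⟨hr₄', hr₄⟩, hroot₄⟩ :=
    sign_change (-1) 0 (by norm_num) (by simp only [interconnectionPoly_eval]; norm_num)
  have hcard : ({r₁, r₂, r₃, r₄} : Finset ℝ).card = 4 :=
    Finset.card_eq_four.mpr ⟨r₁, r₂, r₃, r₄, by linarith, by linarith, by linarith,
      by linarith, by linarith, by linarith, rfl⟩
  obtain ⟨r, hr, rfl⟩ := exists_eq_of_eval_map_eq_zero (algebraMap ℝ ℂ)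
    interconnectionPoly_ne_zero (by simp [hroot₁, hroot₂, hroot₃, hroot₄])
    (hcard ▸ interconnectionPoly_natDegree_le) hz
  simp only [Finset.mem_insert, Finset.mem_singleton] at hr
  rw [Complex.coe_algebraMap, Complex.ofReal_re]
  rcases hr with rfl | rfl | rfl | rfl <;> linarith

/-- The interconnected impedance `Z_T = (Z̃⁻¹ + Z_c⁻¹)⁻¹` is well defined and
stable: every complex root of its denominator has negative real part. -/
theorem stmt_6 :
    Ztilde + Zc ≠ 0 ∧
    ∀ z : ℂ, (((Ztilde⁻¹ + Zc⁻¹)⁻¹).denom.map (algebraMap ℝ ℂ)).eval z = 0 →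
      z.re < 0 := by
  have hsum : Ztilde + Zc = RatFunc.mk interconnectionPoly (ZtildeDen * ZcDen) :=
    RatFunc.mk_add_mk ZtildeDen_ne_zero ZcDen_ne_zero
  have hparallel : (Ztilde⁻¹ + Zc⁻¹)⁻¹ = RatFunc.mk (ZtildeNum * ZcNum) interconnectionPoly := by
    rw [Ztilde_eq_mk, Zc_eq_mk, RatFunc.mk_inv, RatFunc.mk_inv,
      RatFunc.mk_add_mk ZtildeNum_ne_zero ZcNum_ne_zero, RatFunc.mk_inv, interconnectionPoly,
      add_comm]
  refine ⟨hsum ▸ RatFunc.mk_ne_zero interconnectionPoly_ne_zero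
    (mul_ne_zero ZtildeDen_ne_zero ZcDen_ne_zero), fun z hz => ?_⟩
  have hdvd := map_dvd (algebraMap ℝ ℂ) (hparallel ▸ RatFunc.denom_mk_dvd _ _)
  exact interconnectionPoly_re_neg_of_eval_map_eq_zero
    (eval_eq_zero_of_dvd_of_eval_eq_zero hdvd hz)
end

section
/- Let p, q, m be natural numbers, let F be a p×m complex matrix, G a q×m complex matrix, β a positive real number, and let H be an invertible m×m complex matrix with Hᴴ·H = β²·1 − Gᴴ·G. Denote by ‖·‖ the L2 operator norm and by [F; G] the (p+q)×m matrix obtained by vertically stacking F on top of G. If ‖[F; G]‖ < β, then ‖G‖ < β and ‖F·H⁻¹‖ < 1. Conversely, if ‖G‖ < β and ‖F·H⁻¹‖ < 1, then ‖[F; G]‖ ≤ β. -/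
open Matrix
open scoped Matrix.Norms.L2Operator

/-!
Everything reduces to quadratic forms on vectors: `‖[F; G] x‖² = ‖F x‖² + ‖G x‖²`, and the
factorisation gives `‖H x‖² + ‖G x‖² = β² ‖x‖²`. Substituting `y = H x`, the bound
`‖F H⁻¹‖ ≤ k` says `‖F x‖ ≤ k ‖H x‖` for all `x`. If `c = ‖[F; G]‖ ≤ β`, then
`‖F x‖² ≤ c² ‖x‖² - ‖G x‖² ≤ (c/β)² (β² ‖x‖² - ‖G x‖²) = (c/β)² ‖H x‖²`; conversely
`‖F x‖ ≤ ‖H x‖` gives `‖F x‖² + ‖G x‖² ≤ β² ‖x‖²`.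
-/

namespace Matrix

variable {𝕜 : Type*} [RCLike 𝕜] {l m n : Type*} [Fintype l] [Fintype m] [Fintype n]
  [DecidableEq n]

theorem l2_opNorm_le_iff_sq {A : Matrix m n 𝕜} {c : ℝ} (hc : 0 ≤ c) :
    ‖A‖ ≤ c ↔ ∀ x, ‖toEuclideanLin A x‖ ^ 2 ≤ c ^ 2 * ‖x‖ ^ 2 := by
  rw [l2_opNorm_def, ContinuousLinearMap.opNorm_le_iff hc]
  refine forall_congr' fun x => ?_
  rw [← mul_pow, sq_le_sq₀ (norm_nonneg _) (by positivity)]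
  rfl

theorem norm_toEuclideanLin_sq [DecidableEq m] (A : Matrix m n 𝕜) (x : EuclideanSpace 𝕜 n) :
    ‖toEuclideanLin A x‖ ^ 2 = RCLike.re (inner 𝕜 x (toEuclideanLin (Aᴴ * A) x)) := by
  rw [toLpLin_mul_same, LinearMap.comp_apply, toEuclideanLin_conjTranspose_eq_adjoint,
    LinearMap.adjoint_inner_right, inner_self_eq_norm_sq]

theorem norm_toEuclideanLin_sq_add_of_gram [DecidableEq l] [DecidableEq m]
    {H : Matrix l n 𝕜} {G : Matrix m n 𝕜} {c : ℝ}
    (hgram : Hᴴ * H + Gᴴ * G = c • (1 : Matrix n n 𝕜)) (x : EuclideanSpace 𝕜 n) :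
    ‖toEuclideanLin H x‖ ^ 2 + ‖toEuclideanLin G x‖ ^ 2 = c * ‖x‖ ^ 2 := by
  rw [norm_toEuclideanLin_sq, norm_toEuclideanLin_sq, ← map_add, ← inner_add_right,
    ← LinearMap.add_apply, ← map_add, hgram, RCLike.real_smul_eq_coe_smul (K := 𝕜), map_smul, toLpLin_one, LinearMap.smul_apply,
    LinearMap.id_apply, inner_smul_right, inner_self_eq_norm_sq_to_K]
  norm_cast

theorem norm_toEuclideanLin_fromRows_sq (A₁ : Matrix l n 𝕜) (A₂ : Matrix m n 𝕜)
    (x : EuclideanSpace 𝕜 n) :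
    ‖toEuclideanLin (fromRows A₁ A₂) x‖ ^ 2 =
      ‖toEuclideanLin A₁ x‖ ^ 2 + ‖toEuclideanLin A₂ x‖ ^ 2 := by
  simp [EuclideanSpace.norm_sq_eq, toLpLin_apply, fromRows_mulVec, Fintype.sum_sum_type]

theorem l2_opNorm_le_fromRows_right (A₁ : Matrix l n 𝕜) (A₂ : Matrix m n 𝕜) :
    ‖A₂‖ ≤ ‖fromRows A₁ A₂‖ := by
  have hA := (l2_opNorm_le_iff_sq (norm_nonneg (fromRows A₁ A₂))).mp le_rfl
  refine (l2_opNorm_le_iff_sq (norm_nonneg _)).mpr fun x => ?_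
  linarith [hA x, norm_toEuclideanLin_fromRows_sq A₁ A₂ x, sq_nonneg ‖toEuclideanLin A₁ x‖]

theorem l2_opNorm_mul_inv_le_iff {F : Matrix l n 𝕜} {H : Matrix n n 𝕜} (hH : IsUnit H) {k : ℝ}
    (hk : 0 ≤ k) :
    ‖F * H⁻¹‖ ≤ k ↔ ∀ x, ‖toEuclideanLin F x‖ ^ 2 ≤ k ^ 2 * ‖toEuclideanLin H x‖ ^ 2 := by
  have hdet := (isUnit_iff_isUnit_det H).mp hH
  have hsurj : Function.Surjective (toEuclideanLin H) := fun y =>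
    ⟨toEuclideanLin H⁻¹ y, by rw [← LinearMap.comp_apply, ← toLpLin_mul_same,
      mul_nonsing_inv H hdet, toLpLin_one, LinearMap.id_apply]⟩
  rw [l2_opNorm_le_iff_sq hk, hsurj.forall]
  simp only [← LinearMap.comp_apply, ← toLpLin_mul_same, Matrix.mul_assoc,
    nonsing_inv_mul H hdet, Matrix.mul_one]

theorem l2_opNorm_mul_inv_le_div [DecidableEq m] {F : Matrix l n 𝕜} {G : Matrix m n 𝕜}
    {H : Matrix n n 𝕜} {β : ℝ} (hβ : 0 < β) (hH : IsUnit H)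
    (hgram : Hᴴ * H + Gᴴ * G = β ^ 2 • (1 : Matrix n n 𝕜)) (hFG : ‖fromRows F G‖ ≤ β) :
    ‖F * H⁻¹‖ ≤ ‖fromRows F G‖ / β := by
  set c := ‖fromRows F G‖
  have hc : 0 ≤ c := norm_nonneg _
  have hcβ : (c / β) ^ 2 ≤ 1 := by
    rw [div_pow, div_le_one (by positivity)]
    exact pow_le_pow_left₀ hc hFG 2
  have hA := (l2_opNorm_le_iff_sq hc).mp le_rfl
  rw [l2_opNorm_mul_inv_le_iff hH (by positivity)]
  intro x
  have hHx := norm_toEuclideanLin_sq_add_of_gram hgram x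
  calc ‖toEuclideanLin F x‖ ^ 2 ≤ c ^ 2 * ‖x‖ ^ 2 - ‖toEuclideanLin G x‖ ^ 2 := by
        linarith [hA x, norm_toEuclideanLin_fromRows_sq F G x]
    _ ≤ c ^ 2 * ‖x‖ ^ 2 - (c / β) ^ 2 * ‖toEuclideanLin G x‖ ^ 2 := by
        gcongr
        exact mul_le_of_le_one_left (sq_nonneg _) hcβ
    _ = (c / β) ^ 2 * ‖toEuclideanLin H x‖ ^ 2 := by
        rw [eq_sub_of_add_eq hHx]
        field_simp

theorem l2_opNorm_fromRows_le [DecidableEq m] {F : Matrix l n 𝕜} {G : Matrix m n 𝕜}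
    {H : Matrix n n 𝕜} {β : ℝ} (hβ : 0 ≤ β) (hH : IsUnit H)
    (hgram : Hᴴ * H + Gᴴ * G = β ^ 2 • (1 : Matrix n n 𝕜)) (hF : ‖F * H⁻¹‖ ≤ 1) :
    ‖fromRows F G‖ ≤ β := by
  rw [l2_opNorm_le_iff_sq hβ]
  intro x
  rw [norm_toEuclideanLin_fromRows_sq, ← norm_toEuclideanLin_sq_add_of_gram hgram x]
  gcongr ?_ + _
  simpa using (l2_opNorm_mul_inv_le_iff hH zero_le_one).mp hF x

end Matrix

/-- Pointwise content of Francis' Lemma 2: with `H` an invertible spectral factor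
of `β²·1 − Gᴴ·G`, the bound `‖[F; G]‖ < β` is equivalent (up to the boundary)
to the pair of bounds `‖G‖ < β` and `‖F·H⁻¹‖ < 1`. -/
theorem stmt_9 (p q m : ℕ) (F : Matrix (Fin p) (Fin m) ℂ)
    (G : Matrix (Fin q) (Fin m) ℂ) (β : ℝ) (hβ : 0 < β)
    (H : Matrix (Fin m) (Fin m) ℂ) (hH : IsUnit H)
    (hfac : Hᴴ * H = (β ^ 2 : ℂ) • (1 : Matrix (Fin m) (Fin m) ℂ) - Gᴴ * G) :
    (‖Matrix.fromRows F G‖ < β → ‖G‖ < β ∧ ‖F * H⁻¹‖ < 1) ∧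
    (‖G‖ < β → ‖F * H⁻¹‖ < 1 → ‖Matrix.fromRows F G‖ ≤ β) := by
  have hgram : Hᴴ * H + Gᴴ * G = β ^ 2 • (1 : Matrix (Fin m) (Fin m) ℂ) := by
    rw [hfac, sub_add_cancel, ← Complex.ofReal_pow, Complex.coe_smul]
  refine ⟨fun hFG => ⟨?_, ?_⟩, fun _ hF => l2_opNorm_fromRows_le hβ.le hH hgram hF.le⟩
  · exact (l2_opNorm_le_fromRows_right F G).trans_lt hFG
  · calc ‖F * H⁻¹‖ ≤ ‖fromRows F G‖ / β := l2_opNorm_mul_inv_le_div hβ hH hgram hFG.le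
      _ < 1 := (div_lt_one hβ).mpr hFG
end
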